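/- For the matrix X_s (s ≥ 2) and φ = X_s^{-1} e₁ ∈ ℝ^s: if s is odd then the first two components are φ₀ = ξ₀^{-1} and φ₁ = 0, while if s is even then φ₀ = 0 and φ₁ = −ξ₁^{-1}. (Components indexed from 0.) -/

import Mathlib

/-!
Since `X_s` is invertible, `φ` is the unique solution of `X_s φ = e₁`. Row `j + 1` of this system
reads `ξ_{j+1} φ_j = ξ_{j+2} φ_{j+2}`, where `φ_s := 0` (the last row has no superdiagonal entry).
As all `ξ_i > 0`, zeros propagate downwards in steps of two from `φ_s`, so `φ` vanishes at every
index of the parity of `s`: at `1` for odd `s`, at `0` for even `s`. Row `0`,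
`ξ₀ φ₀ - ξ₁ φ₁ = 1`, then yields the other leading entry.
-/

open Matrix

/-- `ξ_i = 1/(2√|4i²−1|)`. -/
noncomputable def xi (i : ℕ) : ℝ := 1 / (2 * Real.sqrt |4 * (i:ℝ)^2 - 1|)

/-- The tridiagonal matrix `X_s`. -/
noncomputable def Xmat (s : ℕ) : Matrix (Fin s) (Fin s) ℝ :=
  Matrix.of fun i j =>
    if i.val = 0 ∧ j.val = 0 then xi 0
    else if i.val = j.val + 1 then xi i.val
    else if j.val = i.val + 1 then -xi j.val
    else 0

lemma xi_pos (i : ℕ) : 0 < xi i := by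
  have : 0 < |4 * (i : ℝ) ^ 2 - 1| := by
    rcases Nat.eq_zero_or_pos i with rfl | hi
    · norm_num
    · have : (1 : ℝ) ≤ i := by exact_mod_cast hi
      rw [abs_pos]
      nlinarith
  unfold xi
  positivity

section entries

variable {s : ℕ} {i j : Fin s}

lemma Xmat_apply_of_val_eq_zero (hi : i.val = 0) (hj : j.val = 0) : Xmat s i j = xi 0 := by
  simp only [Xmat, of_apply, hi, hj, and_self, if_true]

lemma Xmat_apply_of_val_eq_succ (h : i.val = j.val + 1) : Xmat s i j = xi i.val := by
  simp only [Xmat, of_apply, h, Nat.add_one_ne_zero, false_and, if_false, if_true]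

lemma Xmat_apply_of_succ_eq_val (h : j.val = i.val + 1) : Xmat s i j = -xi j.val := by
  rw [Xmat, of_apply, if_neg (by omega), if_neg (by omega), if_pos h]

lemma Xmat_apply_eq_zero (hdiag : i.val ≠ 0 ∨ j.val ≠ 0) (hsub : i.val ≠ j.val + 1)
    (hsup : j.val ≠ i.val + 1) : Xmat s i j = 0 := by
  simp only [Xmat, of_apply, if_neg hsub, if_neg hsup, ite_eq_right_iff]
  omega

end entries

def extendByZero {s : ℕ} (v : Fin s → ℝ) (n : ℕ) : ℝ := if h : n < s then v ⟨n, h⟩ else 0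

lemma extendByZero_of_lt {s n : ℕ} (v : Fin s → ℝ) (h : n < s) : extendByZero v n = v ⟨n, h⟩ :=
  dif_pos h

lemma extendByZero_self {s : ℕ} (v : Fin s → ℝ) : extendByZero v s = 0 :=
  dif_neg (lt_irrefl s)

section rows

variable {s : ℕ} {i : Fin s} (v : Fin s → ℝ)

lemma Xmat_mulVec_of_val_eq_zero (hs : 2 ≤ s) (hi : i.val = 0) :
    (Xmat s *ᵥ v) i = xi 0 * extendByZero v 0 - xi 1 * extendByZero v 1 := by
  rw [mulVec, dotProduct, Fintype.sum_eq_add ⟨0, by omega⟩ ⟨1, hs⟩ (by simp [Fin.ext_iff])]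
  · rw [extendByZero_of_lt v (by omega), extendByZero_of_lt v hs,
      Xmat_apply_of_val_eq_zero hi rfl, Xmat_apply_of_succ_eq_val (by simp [hi])]
    ring
  · rintro k ⟨hk0, hk1⟩
    simp only [ne_eq, Fin.ext_iff] at hk0 hk1
    rw [Xmat_apply_eq_zero (by omega) (by omega) (by omega), zero_mul]

lemma Xmat_mulVec_of_val_eq_succ {j : ℕ} (hi : i.val = j + 1) :
    (Xmat s *ᵥ v) i = xi (j + 1) * extendByZero v j - xi (j + 2) * extendByZero v (j + 2) := by
  rw [mulVec, dotProduct]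
  by_cases hj : j + 2 < s
  · rw [Fintype.sum_eq_add ⟨j, by omega⟩ ⟨j + 2, hj⟩ (by simp [Fin.ext_iff])]
    · rw [extendByZero_of_lt v (by omega), extendByZero_of_lt v hj,
        Xmat_apply_of_val_eq_succ (by simp [hi]), Xmat_apply_of_succ_eq_val (by simp [hi]), hi]
      ring
    · rintro k ⟨hkj, hkj2⟩
      simp only [ne_eq, Fin.ext_iff] at hkj hkj2
      rw [Xmat_apply_eq_zero (by omega) (by omega) (by omega), zero_mul]
  · rw [Fintype.sum_eq_single ⟨j, by omega⟩]
    · rw [extendByZero_of_lt v (by omega), extendByZero, dif_neg hj,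
        Xmat_apply_of_val_eq_succ (by simp [hi]), hi]
      ring
    · intro k hkj
      simp only [ne_eq, Fin.ext_iff] at hkj
      rw [Xmat_apply_eq_zero (by omega) (by omega) (by omega), zero_mul]

end rows

lemma eq_zero_of_even_sub {M : Type*} [Zero M] {f : ℕ → M} {s : ℕ} (hs : f s = 0)
    (step : ∀ j, j + 2 ≤ s → f (j + 2) = 0 → f j = 0) :
    ∀ n ≤ s, Even (s - n) → f n = 0 := by
  rintro n hn ⟨k, hk⟩
  induction k generalizing n with
  | zero => rwa [show n = s by omega]
  | succ k ih => exact step n (by omega) (ih (n + 2) (by omega) (by omega))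

lemma extendByZero_eq_zero_of_even_sub {s : ℕ} {v : Fin s → ℝ}
    (hv : ∀ i : Fin s, i.val ≠ 0 → (Xmat s *ᵥ v) i = 0) :
    ∀ n ≤ s, Even (s - n) → extendByZero v n = 0 := by
  refine eq_zero_of_even_sub (extendByZero_self v) fun j hj hzero => ?_
  have hrow := hv ⟨j + 1, by omega⟩ (by simp)
  rw [Xmat_mulVec_of_val_eq_succ v rfl, hzero, mul_zero, sub_zero] at hrow
  exact (mul_eq_zero.mp hrow).resolve_left (xi_pos _).ne'

/-- for `s ≥ 2` and `φ = X_s⁻¹ e₁`: if `s` is odd then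
`φ₀ = ξ₀⁻¹` and `φ₁ = 0`; if `s` is even then `φ₀ = 0` and `φ₁ = −ξ₁⁻¹`. -/
theorem Xinv_e1_leading_entries (s : ℕ) (hs : 2 ≤ s)
    (hdet : IsUnit (Xmat s).det) :
    let φ := (Xmat s)⁻¹.mulVec (Pi.single (⟨0, by omega⟩ : Fin s) (1:ℝ))
    (Odd s → φ ⟨0, by omega⟩ = (xi 0)⁻¹ ∧ φ ⟨1, by omega⟩ = 0) ∧
    (Even s → φ ⟨0, by omega⟩ = 0 ∧ φ ⟨1, by omega⟩ = -(xi 1)⁻¹) := by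
  intro φ
  have hφ : Xmat s *ᵥ φ = Pi.single ⟨0, by omega⟩ 1 := by
    rw [mulVec_mulVec, mul_nonsing_inv _ hdet, one_mulVec]
  have hzero := extendByZero_eq_zero_of_even_sub (v := φ) fun i hi => by
    rw [hφ, Pi.single_eq_of_ne (by simpa [Fin.ext_iff] using hi)]
  have hrow0 : xi 0 * extendByZero φ 0 - xi 1 * extendByZero φ 1 = 1 := by
    rw [← Xmat_mulVec_of_val_eq_zero φ hs (i := ⟨0, by omega⟩) rfl, hφ, Pi.single_eq_same]
  rw [extendByZero_of_lt φ (by omega), extendByZero_of_lt φ hs] at hrow0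
  refine ⟨fun hodd => ?_, fun heven => ?_⟩
  · have h1 : φ ⟨1, hs⟩ = 0 := by
      rw [← extendByZero_of_lt φ hs]
      exact hzero 1 (by omega) (by rcases hodd with ⟨k, rfl⟩; simp)
    refine ⟨?_, h1⟩
    rw [h1, mul_zero, sub_zero] at hrow0
    exact eq_inv_of_mul_eq_one_right hrow0
  · have h0 : φ ⟨0, by omega⟩ = 0 := by
      rw [← extendByZero_of_lt φ (by omega)]
      exact hzero 0 (by omega) (by simpa using heven)
    refine ⟨h0, ?_⟩
    rw [h0, mul_zero, zero_sub, ← mul_neg] at hrow0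
    exact neg_eq_iff_eq_neg.mp (eq_inv_of_mul_eq_one_right hrow0)
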